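/- Suppose β ∈ ℝ^p is s-sparse, let B = β ⊗ β, let w_β = β/‖β‖₂ + s^{-1/2}·sign(β), and let T = { x ⊗ β + β ⊗ y : x, y ∈ ℝ^p }. If W^⊥ ∈ T^⊥ (orthogonal complement of T in the Frobenius inner product) has operator norm ‖W^⊥‖ ≤ 1, then W = w_β ⊗ w_β + W^⊥ is a subgradient of the mixed atomic norm at B: ⟨Wβ, β⟩ = θ_s(β,β) and ⟨Wu, v⟩ ≤ θ_s(u,v) for all u, v ∈ ℝ^p. -/

import Mathlib

/-!
Write `t = s^{-1/2}`, `b = β / ‖β‖₂` and `σ = sign β`, so that `w_β = b + t σ`, and let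
`N(u) = ‖u‖₂ + t ‖u‖₁`. Because `W^⊥ ⊥ T`, the matrix `W^⊥` kills `b` on both sides, so
`⟨W^⊥ u, v⟩ = ⟨W^⊥ u', v'⟩ ≤ ‖u'‖₂ ‖v'‖₂`, where `u' = u - ⟨b, u⟩ b`. The bounds
`|⟨b, u⟩| ≤ ‖u‖₂` and `|⟨σ, u⟩| ≤ ‖u‖₁` give `⟨w_β, u⟩² + ‖u'‖₂² ≤ N(u)²`, and Cauchy–Schwarz
in `ℝ²` turns the two such bounds into `⟨w_β, u⟩⟨w_β, v⟩ + ‖u'‖₂ ‖v'‖₂ ≤ N(u) N(v) = θ_s(u, v)`.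
-/

open MeasureTheory ProbabilityTheory Finset

noncomputable section

/-- Vectors in ℝ^p. -/
abbrev Vec (p : ℕ) := Fin p → ℝ

/-- p × p real matrices. -/
abbrev Mat (p : ℕ) := Matrix (Fin p) (Fin p) ℝ

/-- Euclidean (ℓ2) norm. -/
def l2 {p : ℕ} (u : Vec p) : ℝ := Real.sqrt (∑ i, (u i) ^ 2)

/-- ℓ1 norm. -/
def l1 {p : ℕ} (u : Vec p) : ℝ := ∑ i, |u i|

/-- Euclidean inner product. -/
def dotp {p : ℕ} (u v : Vec p) : ℝ := ∑ i, u i * v i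

/-- θ_s(u,v) = (‖u‖₂ + s^{-1/2}‖u‖₁)(‖v‖₂ + s^{-1/2}‖v‖₁). -/
def theta {p : ℕ} (s : ℝ) (u v : Vec p) : ℝ :=
  (l2 u + (Real.sqrt s)⁻¹ * l1 u) * (l2 v + (Real.sqrt s)⁻¹ * l1 v)

/-- Frobenius (Hilbert–Schmidt) inner product. -/
def frob {p : ℕ} (A B : Mat p) : ℝ := ∑ i, ∑ j, A i j * B i j

/-- Frobenius norm. -/
def frobNorm {p : ℕ} (A : Mat p) : ℝ := Real.sqrt (frob A A)

/-- The mixed atomic norm ‖B‖_{Γ_s}. -/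
def mixedNorm {p : ℕ} (s : ℝ) (B : Mat p) : ℝ :=
  sInf { t | ∃ (K : ℕ) (u v : Fin K → Vec p),
    B = ∑ k, Matrix.vecMulVec (u k) (v k) ∧ t = ∑ k, theta s (u k) (v k) }

/-- Dual norm of the mixed atomic norm. -/
def dualMixedNorm {p : ℕ} (s : ℝ) (Z : Mat p) : ℝ :=
  sSup { t | ∃ B : Mat p, mixedNorm s B ≤ 1 ∧ t = frob Z B }

/-- A vector is `s`-sparse if it has at most `s` nonzero entries. -/
def IsSparse {p : ℕ} (s : ℕ) (u : Vec p) : Prop := {i | u i ≠ 0}.ncard ≤ s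

/-- Nuclear norm of a real matrix: the sum of its singular values. -/
def nuclearNorm {p : ℕ} (A : Mat p) : ℝ :=
  ∑ i, Real.sqrt ((show (A.transpose * A).IsHermitian by
    simpa using Matrix.isHermitian_conjTranspose_mul_self A).eigenvalues i)

/-- Operator (spectral) norm of a real matrix. -/
def opNorm {p : ℕ} (A : Mat p) : ℝ :=
  sSup { t | ∃ u v : Vec p, l2 u ≤ 1 ∧ l2 v ≤ 1 ∧ t = dotp (A.mulVec u) v }

/-- `X` has sub-Gaussian (ψ₂) norm at most `K`: `E exp(X²/K²) ≤ 2`. -/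
def HasSubgaussianNorm {Ω : Type*} [MeasurableSpace Ω] (μ : Measure Ω) (X : Ω → ℝ) (K : ℝ) :
    Prop := ∫ ω, Real.exp ((X ω) ^ 2 / K ^ 2) ∂μ ≤ 2

/-- `W` is a subgradient of the mixed atomic norm `‖·‖_{Γ_s}` at `B`. -/
def InSubdiff {p : ℕ} (s : ℝ) (W B : Mat p) : Prop :=
  ∀ C : Mat p, mixedNorm s B + frob W (C - B) ≤ mixedNorm s C

open Matrix

section Norms

variable {p : ℕ}

lemma dotp_eq_dotProduct (u v : Vec p) : dotp u v = u ⬝ᵥ v := rfl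

lemma l2_nonneg (u : Vec p) : 0 ≤ l2 u := Real.sqrt_nonneg _

lemma l1_nonneg (u : Vec p) : 0 ≤ l1 u := Finset.sum_nonneg fun i _ => abs_nonneg (u i)

lemma l2_sq (u : Vec p) : l2 u ^ 2 = u ⬝ᵥ u := by
  rw [l2, Real.sq_sqrt (Finset.sum_nonneg fun i _ => sq_nonneg (u i))]
  simp only [dotProduct, sq]

lemma eq_zero_of_l2_eq_zero {u : Vec p} (h : l2 u = 0) : u = 0 :=
  dotProduct_self_eq_zero.mp (by rw [← l2_sq, h, sq, zero_mul])

lemma l2_smul (c : ℝ) (u : Vec p) : l2 (c • u) = |c| * l2 u := by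
  rw [← Real.sqrt_sq (l2_nonneg _), l2_sq, ← Real.sqrt_sq (mul_nonneg (abs_nonneg c) (l2_nonneg u)),
    mul_pow, sq_abs, l2_sq, smul_dotProduct, dotProduct_smul, smul_eq_mul, smul_eq_mul, ← mul_assoc,
    ← sq]

lemma abs_le_l2 (u : Vec p) (i : Fin p) : |u i| ≤ l2 u := by
  rw [l2, ← Real.sqrt_sq_eq_abs]
  exact Real.sqrt_le_sqrt (Finset.single_le_sum (fun j _ => sq_nonneg (u j)) (Finset.mem_univ i))

lemma abs_dotProduct_le_l2_mul_l2 (u v : Vec p) : |u ⬝ᵥ v| ≤ l2 u * l2 v := by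
  refine abs_le_of_sq_le_sq ?_ (mul_nonneg (l2_nonneg u) (l2_nonneg v))
  rw [mul_pow, l2_sq, l2_sq]
  simpa only [dotProduct, sq] using Finset.sum_mul_sq_le_sq_mul_sq Finset.univ u v

lemma abs_dotProduct_le_l1 {σ : Vec p} (hσ : ∀ i, |σ i| ≤ 1) (u : Vec p) : |σ ⬝ᵥ u| ≤ l1 u := by
  refine (Finset.abs_sum_le_sum_abs _ _).trans (Finset.sum_le_sum fun i _ => ?_)
  rw [abs_mul]
  exact mul_le_of_le_one_left (abs_nonneg (u i)) (hσ i)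

lemma l2_sub_smul_sq_le {b : Vec p} (hb : l2 b ≤ 1) (u : Vec p) :
    l2 (u - (b ⬝ᵥ u) • b) ^ 2 ≤ l2 u ^ 2 - (b ⬝ᵥ u) ^ 2 := by
  have hbb : b ⬝ᵥ b ≤ 1 := by
    rw [← l2_sq]; exact pow_le_one₀ (l2_nonneg b) hb
  have expand : l2 (u - (b ⬝ᵥ u) • b) ^ 2
      = l2 u ^ 2 - 2 * (b ⬝ᵥ u) ^ 2 + (b ⬝ᵥ u) ^ 2 * (b ⬝ᵥ b) := by
    simp only [l2_sq, sub_dotProduct, dotProduct_sub, smul_dotProduct, dotProduct_smul,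
      smul_eq_mul, dotProduct_comm u b]
    ring
  nlinarith [sq_nonneg (b ⬝ᵥ u)]

end Norms

lemma Real.sign_mul_self (x : ℝ) : Real.sign x * x = |x| := by
  rcases lt_trichotomy x 0 with hx | rfl | hx
  · rw [Real.sign_of_neg hx, abs_of_neg hx, neg_one_mul]
  · simp
  · rw [Real.sign_of_pos hx, abs_of_pos hx, one_mul]

lemma Real.abs_sign_le_one (x : ℝ) : |Real.sign x| ≤ 1 := by
  rcases Real.sign_apply_eq x with h | h | h <;> simp [h]

lemma sign_dotProduct_self {p : ℕ} (u : Vec p) : (fun i => Real.sign (u i)) ⬝ᵥ u = l1 u :=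
  Finset.sum_congr rfl fun i _ => Real.sign_mul_self (u i)

section Operators

variable {p : ℕ}

lemma frob_vecMulVec (A : Mat p) (x y : Vec p) : frob A (vecMulVec x y) = x ⬝ᵥ (A *ᵥ y) := by
  simp only [frob, vecMulVec_apply, dotProduct, mulVec, Finset.mul_sum]
  exact Finset.sum_congr rfl fun i _ => Finset.sum_congr rfl fun j _ => by ring

lemma frob_add_right (A B C : Mat p) : frob A (B + C) = frob A B + frob A C := by
  simp only [frob, Matrix.add_apply, mul_add, Finset.sum_add_distrib]

lemma mulVec_eq_zero_and_vecMul_eq_zero_of_frob_tangent_eq_zero {A : Mat p} {β : Vec p}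
    (h : ∀ x y : Vec p, frob A (vecMulVec x β + vecMulVec β y) = 0) :
    A *ᵥ β = 0 ∧ β ᵥ* A = 0 := by
  constructor
  · refine dotProduct_self_eq_zero.mp ?_
    simpa [frob_add_right, frob_vecMulVec] using h (A *ᵥ β) 0
  · refine dotProduct_self_eq_zero.mp ?_
    simpa [frob_add_right, frob_vecMulVec, dotProduct_mulVec] using h 0 (β ᵥ* A)

lemma bddAbove_opNorm_set (A : Mat p) :
    BddAbove {t | ∃ u v : Vec p, l2 u ≤ 1 ∧ l2 v ≤ 1 ∧ t = dotp (A *ᵥ u) v} := by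
  refine ⟨∑ i, ∑ j, |A i j|, ?_⟩
  rintro t ⟨u, v, hu, hv, rfl⟩
  calc dotp (A *ᵥ u) v = ∑ i, ∑ j, A i j * u j * v i := by
        simp only [dotp, mulVec, dotProduct, Finset.sum_mul]
    _ ≤ ∑ i, ∑ j, |A i j| := by
        refine Finset.sum_le_sum fun i _ => Finset.sum_le_sum fun j _ => ?_
        calc A i j * u j * v i ≤ |A i j| * |u j| * |v i| := by
              rw [← abs_mul, ← abs_mul]; exact le_abs_self _
          _ ≤ |A i j| * 1 * 1 := by
              gcongr
              exacts [(abs_le_l2 u j).trans hu, (abs_le_l2 v i).trans hv]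
          _ = |A i j| := by ring

lemma mulVec_dotProduct_le_of_opNorm_le_one {A : Mat p} (hA : opNorm A ≤ 1) (x y : Vec p) :
    A *ᵥ x ⬝ᵥ y ≤ l2 x * l2 y := by
  rcases (l2_nonneg x).eq_or_lt with hx | hx
  · rw [eq_zero_of_l2_eq_zero hx.symm, mulVec_zero, zero_dotProduct]
    exact mul_nonneg (l2_nonneg _) (l2_nonneg _)
  rcases (l2_nonneg y).eq_or_lt with hy | hy
  · rw [eq_zero_of_l2_eq_zero hy.symm, dotProduct_zero]
    exact mul_nonneg (l2_nonneg _) (l2_nonneg _)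
  have unit : ∀ {z : Vec p}, 0 < l2 z → l2 ((l2 z)⁻¹ • z) ≤ 1 := fun hz => by
    rw [l2_smul, abs_inv, abs_of_pos hz, inv_mul_cancel₀ hz.ne']
  have h := (le_csSup (bddAbove_opNorm_set A) ⟨_, _, unit hx, unit hy, rfl⟩).trans hA
  rw [dotp_eq_dotProduct, mulVec_smul, smul_dotProduct, dotProduct_smul, smul_eq_mul,
    smul_eq_mul, ← mul_assoc, ← mul_inv, inv_mul_le_iff₀ (mul_pos hx hy), mul_one] at h
  exact h

lemma rankOne_add_mulVec_dotProduct (w : Vec p) (A : Mat p) (u v : Vec p) :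
    (vecMulVec w w + A) *ᵥ u ⬝ᵥ v = w ⬝ᵥ u * (w ⬝ᵥ v) + A *ᵥ u ⬝ᵥ v := by
  rw [add_mulVec, vecMulVec_mulVec, add_dotProduct, op_smul_eq_smul, smul_dotProduct,
    smul_eq_mul]

lemma mulVec_sub_smul_dotProduct_sub_smul {A : Mat p} {b : Vec p} (hAb : A *ᵥ b = 0)
    (hbA : b ᵥ* A = 0) (u v : Vec p) (c d : ℝ) :
    A *ᵥ (u - c • b) ⬝ᵥ (v - d • b) = A *ᵥ u ⬝ᵥ v := by
  rw [mulVec_sub, mulVec_smul, hAb, smul_zero, sub_zero, dotProduct_sub, dotProduct_smul,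
    dotProduct_comm (A *ᵥ u) b, dotProduct_mulVec, hbA, zero_dotProduct, smul_zero, sub_zero]

end Operators

lemma sq_add_mul_add_sq_sub_sq_le {A L c d t : ℝ} (ht : 0 ≤ t) (hc : |c| ≤ A) (hd : |d| ≤ L) :
    (c + t * d) ^ 2 + (A ^ 2 - c ^ 2) ≤ (A + t * L) ^ 2 := by
  have hcd : c * d ≤ A * L := by
    refine (le_abs_self _).trans ?_
    rw [abs_mul]
    exact mul_le_mul hc hd (abs_nonneg d) ((abs_nonneg c).trans hc)
  have hdL : d ^ 2 ≤ L ^ 2 := sq_le_sq' (abs_le.mp hd).1 (abs_le.mp hd).2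
  nlinarith [mul_nonneg ht (sub_nonneg.mpr hcd), mul_nonneg (mul_nonneg ht ht) (sub_nonneg.mpr hdL)]

lemma mul_add_mul_le_of_sq_add_sq_le {a x b y M N : ℝ} (hM : 0 ≤ M) (hN : 0 ≤ N)
    (hax : a ^ 2 + x ^ 2 ≤ M ^ 2) (hby : b ^ 2 + y ^ 2 ≤ N ^ 2) : a * b + x * y ≤ M * N := by
  refine (le_abs_self _).trans (abs_le_of_sq_le_sq ?_ (mul_nonneg hM hN))
  have cauchy_schwarz : (a * b + x * y) ^ 2 ≤ (a ^ 2 + x ^ 2) * (b ^ 2 + y ^ 2) := by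
    nlinarith [sq_nonneg (a * y - x * b)]
  calc (a * b + x * y) ^ 2 ≤ (a ^ 2 + x ^ 2) * (b ^ 2 + y ^ 2) := cauchy_schwarz
    _ ≤ M ^ 2 * N ^ 2 := mul_le_mul hax hby (by positivity) (by positivity)
    _ = (M * N) ^ 2 := (mul_pow M N 2).symm

section Subgradient

variable {p : ℕ} {t : ℝ} {b σ : Vec p}

lemma sq_dotProduct_add_l2_sub_smul_sq_le (ht : 0 ≤ t) (hb : l2 b ≤ 1) (hσ : ∀ i, |σ i| ≤ 1)
    (u : Vec p) :
    ((b + t • σ) ⬝ᵥ u) ^ 2 + l2 (u - (b ⬝ᵥ u) • b) ^ 2 ≤ (l2 u + t * l1 u) ^ 2 := by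
  have hbu : |b ⬝ᵥ u| ≤ l2 u :=
    (abs_dotProduct_le_l2_mul_l2 b u).trans (mul_le_of_le_one_left (l2_nonneg u) hb)
  rw [add_dotProduct, smul_dotProduct, smul_eq_mul]
  linarith [l2_sub_smul_sq_le hb u,
    sq_add_mul_add_sq_sub_sq_le ht hbu (abs_dotProduct_le_l1 hσ u)]

theorem dotProduct_mul_dotProduct_add_mulVec_dotProduct_le (ht : 0 ≤ t) (hb : l2 b ≤ 1)
    (hσ : ∀ i, |σ i| ≤ 1) {A : Mat p} (hAb : A *ᵥ b = 0) (hbA : b ᵥ* A = 0)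
    (hA : ∀ x y : Vec p, A *ᵥ x ⬝ᵥ y ≤ l2 x * l2 y) (u v : Vec p) :
    (b + t • σ) ⬝ᵥ u * ((b + t • σ) ⬝ᵥ v) + A *ᵥ u ⬝ᵥ v
      ≤ (l2 u + t * l1 u) * (l2 v + t * l1 v) := by
  have hN : ∀ z : Vec p, 0 ≤ l2 z + t * l1 z := fun z =>
    add_nonneg (l2_nonneg z) (mul_nonneg ht (l1_nonneg z))
  rw [← mulVec_sub_smul_dotProduct_sub_smul hAb hbA u v (b ⬝ᵥ u) (b ⬝ᵥ v)]
  calc _ ≤ (b + t • σ) ⬝ᵥ u * ((b + t • σ) ⬝ᵥ v)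
          + l2 (u - (b ⬝ᵥ u) • b) * l2 (v - (b ⬝ᵥ v) • b) := by
        gcongr; exact hA _ _
    _ ≤ _ := mul_add_mul_le_of_sq_add_sq_le (hN u) (hN v)
        (sq_dotProduct_add_l2_sub_smul_sq_le ht hb hσ u)
        (sq_dotProduct_add_l2_sub_smul_sq_le ht hb hσ v)

end Subgradient

theorem subgradient_case_two_general {p s : ℕ} (β : Vec p) (Wp : Mat p)
    (hWp_T : ∀ x y : Vec p, frob Wp (Matrix.vecMulVec x β + Matrix.vecMulVec β y) = 0)
    (hWp_op : opNorm Wp ≤ 1) :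
    let w : Vec p := fun i => β i / l2 β + (Real.sqrt (s : ℝ))⁻¹ * Real.sign (β i)
    let W : Mat p := Matrix.vecMulVec w w + Wp
    dotp (W.mulVec β) β = theta (s : ℝ) β β ∧
    ∀ u v : Vec p, dotp (W.mulVec u) v ≤ theta (s : ℝ) u v := by
  intro w W
  set t : ℝ := (Real.sqrt s)⁻¹
  set b : Vec p := (l2 β)⁻¹ • β
  have hw : w = b + t • fun i => Real.sign (β i) := by
    ext i
    simp only [w, b, t, Pi.add_apply, Pi.smul_apply, smul_eq_mul, div_eq_inv_mul]
  have hb : l2 b ≤ 1 := by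
    rw [l2_smul, abs_inv, abs_of_nonneg (l2_nonneg β)]
    exact inv_mul_le_one
  have hbβ : b ⬝ᵥ β = l2 β := by
    rw [smul_dotProduct, ← l2_sq, smul_eq_mul, sq, ← mul_assoc, inv_mul_mul_self]
  obtain ⟨hWβ, hβW⟩ := mulVec_eq_zero_and_vecMul_eq_zero_of_frob_tangent_eq_zero hWp_T
  refine ⟨?_, fun u v => ?_⟩
  · rw [dotp_eq_dotProduct, rankOne_add_mulVec_dotProduct, hWβ, zero_dotProduct, add_zero, hw,
      add_dotProduct, hbβ, smul_dotProduct, sign_dotProduct_self, smul_eq_mul, theta]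
  · rw [dotp_eq_dotProduct, rankOne_add_mulVec_dotProduct, hw, theta]
    exact dotProduct_mul_dotProduct_add_mulVec_dotProduct_le (inv_nonneg.mpr (Real.sqrt_nonneg _))
      hb (fun i => Real.abs_sign_le_one (β i)) (by rw [mulVec_smul, hWβ, smul_zero])
      (by rw [smul_vecMul, hβW, smul_zero]) (mulVec_dotProduct_le_of_opNorm_le_one hWp_op) u v

/-- Lemma A.2, case 2. Adding any matrix in `T^⊥` of operator norm at most one
to `w_β ⊗ w_β` gives a subgradient of the mixed atomic norm at `β ⊗ β`. -/
theorem subgradient_case_two {p s : ℕ} (hs : 0 < s) (β : Vec p)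
    (hβ : IsSparse s β) (hβ0 : β ≠ 0) (Wp : Mat p)
    (hWp_T : ∀ x y : Vec p, frob Wp (Matrix.vecMulVec x β + Matrix.vecMulVec β y) = 0)
    (hWp_op : opNorm Wp ≤ 1) :
    let w : Vec p := fun i => β i / l2 β + (Real.sqrt (s : ℝ))⁻¹ * Real.sign (β i)
    let W : Mat p := Matrix.vecMulVec w w + Wp
    dotp (W.mulVec β) β = theta (s : ℝ) β β ∧
    ∀ u v : Vec p, dotp (W.mulVec u) v ≤ theta (s : ℝ) u v :=
  subgradient_case_two_general β Wp hWp_T hWp_op
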